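/- arXiv:math/0207100 — 2 statements merged into one kernel-verified Lean document; each statement's English description precedes it below -/
import Mathlib

section
/- If G is a forest with n ≥ 1 vertices, then the number of maximal independent sets of G is at most 2^⌊n/2⌋. -/
/-!
Induction on the number of vertices. An edgeless graph has the single maximal independent set
`univ`. Otherwise the forest has a leaf `v` with neighbour `u`. A maximal independent set either
contains `u`, and is then `u` together with a maximal independent set of `G - N[u]`, or it avoids
`u`, hence contains `v`, and is then `v` together with a maximal independent set of `G - {u, v}`.
Both graphs are forests on at most `n - 2` vertices, so `m(G) ≤ 2 · 2 ^ ((n - 2) / 2) = 2 ^ (n / 2)`.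
-/

/-- `I` is an independent set of the simple graph `G`. -/
def IsIndepSet {V : Type*} (G : SimpleGraph V) (I : Set V) : Prop :=
  ∀ ⦃u⦄, u ∈ I → ∀ ⦃w⦄, w ∈ I → ¬ G.Adj u w

/-- `I` is a maximal independent set of the simple graph `G`. -/
def IsMaxIndepSet {V : Type*} (G : SimpleGraph V) (I : Set V) : Prop :=
  IsIndepSet G I ∧ ∀ J, IsIndepSet G J → I ⊆ J → J = I

/-- `numMIS G` is the number of maximal independent sets of `G`. -/
noncomputable def numMIS {V : Type*} (G : SimpleGraph V) : ℕ :=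
  {I : Set V | IsMaxIndepSet G I}.ncard

lemma SimpleGraph.IsAcyclic.exists_existsUnique_adj {V : Type*} [Finite V]
    {G : SimpleGraph V} (hG : G.IsAcyclic) {a b : V} (hab : G.Adj a b) :
    ∃ v, ∃! u, G.Adj v u := by
  have : Nonempty V := ⟨a⟩
  -- the start of a longest path is a leaf
  obtain ⟨v, _, p, hp, hlongest⟩ := SimpleGraph.Walk.exists_isPath_forall_isPath_length_le_length G
  have hnil : ¬ p.Nil := fun hnil => by
    simpa [hnil.length_eq_zero] using hlongest a b _ (SimpleGraph.Path.singleton hab).2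
  refine ⟨v, p.snd, p.adj_snd hnil, fun w hvw => hG.eq_snd_of_adj_start hp hvw ?_⟩
  by_contra hw
  simpa using hlongest w _ (p.cons hvw.symm) (hp.cons hw)

section MaxIndepSet

variable {V : Type*} {G : SimpleGraph V} {I : Set V}

lemma IsIndepSet.insert (hI : IsIndepSet G I) {x : V} (hx : ∀ y ∈ I, ¬ G.Adj x y) :
    IsIndepSet G (insert x I) := by
  rintro a (rfl | ha) b (rfl | hb) hab
  · exact G.irrefl hab
  · exact hx b hb hab
  · exact hx a ha hab.symm
  · exact hI ha hb hab

lemma IsMaxIndepSet.mem_of_forall_not_adj (hI : IsMaxIndepSet G I) {x : V}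
    (hx : ∀ y ∈ I, ¬ G.Adj x y) : x ∈ I :=
  hI.2 _ (hI.1.insert hx) (Set.subset_insert _ _) ▸ Set.mem_insert x I

lemma IsMaxIndepSet.preimage_val {T : Set V} (hI : IsMaxIndepSet G I)
    (hT : ∀ x ∈ I \ T, ∀ y ∈ T, ¬ G.Adj x y) :
    IsMaxIndepSet (G.induce T) (Subtype.val ⁻¹' I) := by
  refine ⟨fun x hx y hy => hI.1 hx hy, fun J hJ hIJ => hIJ.antisymm' fun x hxJ => ?_⟩
  refine hI.mem_of_forall_not_adj fun y hyI hxy => ?_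
  by_cases hyT : y ∈ T
  · exact hJ hxJ (hIJ (show (⟨y, hyT⟩ : T) ∈ Subtype.val ⁻¹' I from hyI)) hxy
  · exact hT y ⟨hyI, hyT⟩ x x.2 hxy.symm

lemma ncard_setOf_isMaxIndepSet_diff_eq_le [Finite V] {S T : Set V}
    (hST : ∀ x ∈ S, ∀ y ∈ T, ¬ G.Adj x y) :
    {I | IsMaxIndepSet G I ∧ I \ T = S}.ncard ≤ numMIS (G.induce T) := by
  refine Set.ncard_le_ncard_of_injOn (fun I => Subtype.val ⁻¹' I)
    (fun I ⟨hI, hIT⟩ => hI.preimage_val (hIT ▸ hST)) ?_ (Set.toFinite _)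
  rintro I ⟨-, hIT⟩ I' ⟨-, hI'T⟩ hII'
  ext x
  by_cases hx : x ∈ T
  · exact Set.ext_iff.1 hII' ⟨x, hx⟩
  · simpa [hx] using Set.ext_iff.1 (hIT.trans hI'T.symm) x

lemma numMIS_bot : numMIS (⊥ : SimpleGraph V) = 1 := by
  have hindep : IsIndepSet (⊥ : SimpleGraph V) Set.univ := fun _ _ _ _ => id
  rw [numMIS, Set.ncard_eq_one]
  refine ⟨Set.univ, Set.eq_singleton_iff_unique_mem.2 ⟨⟨hindep, fun J _ => Set.univ_subset_iff.1⟩,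
    fun I hI => (hI.2 _ hindep (Set.subset_univ I)).symm⟩⟩

lemma numMIS_le_add_of_forall_adj_eq [Finite V] {u v : V} (hvu : G.Adj v u)
    (hv : ∀ w, G.Adj v w → w = u) :
    numMIS G ≤ numMIS (G.induce (insert u (G.neighborSet u))ᶜ) + numMIS (G.induce {u, v}ᶜ) := by
  have hsplit : {I | IsMaxIndepSet G I} ⊆
      {I | IsMaxIndepSet G I ∧ I \ (insert u (G.neighborSet u))ᶜ = {u}} ∪
        {I | IsMaxIndepSet G I ∧ I \ {u, v}ᶜ = {v}} := by
    intro I hI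
    by_cases huI : u ∈ I
    · refine Or.inl ⟨hI, Set.ext fun x => ?_⟩
      have hu_nonadj : x ∈ I → ¬ G.Adj u x := fun hx => hI.1 huI hx
      simp only [Set.sdiff_compl, Set.mem_inter_iff, Set.mem_insert_iff,
        SimpleGraph.mem_neighborSet, Set.mem_singleton_iff]
      grind
    · have hvI : v ∈ I := hI.mem_of_forall_not_adj fun y hyI hvy => huI (hv y hvy ▸ hyI)
      refine Or.inr ⟨hI, Set.ext fun x => ?_⟩
      simp only [Set.sdiff_compl, Set.mem_inter_iff, Set.mem_insert_iff, Set.mem_singleton_iff]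
      grind
  calc numMIS G ≤ _ := Set.ncard_le_ncard hsplit (Set.toFinite _)
    _ ≤ _ := Set.ncard_union_le _ _
    _ ≤ _ := add_le_add
        (ncard_setOf_isMaxIndepSet_diff_eq_le fun x hx y hy hxy => by
          obtain rfl := Set.mem_singleton_iff.1 hx
          exact hy (Or.inr hxy))
        (ncard_setOf_isMaxIndepSet_diff_eq_le fun x hx y hy hxy => by
          obtain rfl := Set.mem_singleton_iff.1 hx
          exact hy (Or.inl (hv y hxy)))

theorem numMIS_le_of_isAcyclic [Finite V] (hG : G.IsAcyclic) :
    numMIS G ≤ 2 ^ (Nat.card V / 2) := by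
  induction h : Nat.card V using Nat.strong_induction_on generalizing V with
  | _ n ih =>
  by_cases hE : ∃ a b, G.Adj a b
  · obtain ⟨a, b, hab⟩ := hE
    obtain ⟨v, u, hvu, hv⟩ := hG.exists_existsUnique_adj hab
    have hcard_pair : Nat.card ({u, v}ᶜ : Set V) = n - 2 := by
      rw [Nat.card_coe_set_eq, Set.ncard_compl, Set.ncard_pair hvu.ne', h]
    have hcard_nbhd : Nat.card ((insert u (G.neighborSet u))ᶜ : Set V) ≤ n - 2 :=
      hcard_pair ▸ Set.ncard_le_ncard (Set.compl_subset_compl.2 <| Set.insert_subset_insert <|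
        Set.singleton_subset_iff.2 hvu.symm)
    have hn : 2 ≤ n := h ▸ Set.ncard_pair hvu.ne' ▸ Set.ncard_le_card _
    have bound {T : Set V} (hT : Nat.card T ≤ n - 2) : numMIS (G.induce T) ≤ 2 ^ ((n - 2) / 2) :=
      (ih _ (by omega) (hG.induce T) rfl).trans <|
        Nat.pow_le_pow_right two_pos (Nat.div_le_div_right hT)
    calc numMIS G ≤ 2 ^ ((n - 2) / 2) + 2 ^ ((n - 2) / 2) :=
          (numMIS_le_add_of_forall_adj_eq hvu hv).trans
            (add_le_add (bound hcard_nbhd) (bound hcard_pair.le))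
      _ = 2 ^ (n / 2) := by
          rw [← two_mul, ← pow_succ']
          congr 1
          omega
  · obtain rfl : G = ⊥ := SimpleGraph.eq_bot_iff_forall_not_adj.2 (by simpa using hE)
    rw [numMIS_bot]
    exact Nat.one_le_two_pow

end MaxIndepSet

theorem numMIS_forest_le_general {V : Type*} [Fintype V] (G : SimpleGraph V)
    (hG : G.IsAcyclic) :
    numMIS G ≤ 2 ^ (Fintype.card V / 2) :=
  Nat.card_eq_fintype_card (α := V) ▸ numMIS_le_of_isAcyclic hG

theorem numMIS_forest_le {V : Type*} [Fintype V] (G : SimpleGraph V)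
    (hG : G.IsAcyclic) (hn : 1 ≤ Fintype.card V) :
    numMIS G ≤ 2 ^ (Fintype.card V / 2) :=
  numMIS_forest_le_general G hG
end

section
/- If G is a tree with n vertices, then m(G) ≤ 2^{(n−2)/2} + 1 when n is even, and m(G) ≤ 2^{(n−1)/2} when n is odd. -/
/-!
Two maximal independent sets that agree on one side `A` of a bipartition coincide: a vertex
outside `A` belongs to such a set iff none of its neighbours, all of which lie in `A`, does. So a
bipartite graph has at most `2 ^ min |A| |Aᶜ|` maximal independent sets, which is already the
bound unless the tree has `2k` vertices and both classes have size `k`. In that case let `x` be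
the end of a longest path and `y` its neighbour: every maximal independent set contains `x` or
`y`, and every neighbour of `y` except its predecessor on the path is a leaf. If `y` has a second
leaf `x'`, the sets containing `x'` (hence `x`) and those containing `y` (hence neither) are each
determined by their trace on `k - 2` vertices of `A`. Otherwise `y` has a single further
neighbour `z`; the sets containing `y` miss `x, z ∈ A`, and the sets containing `x` restrict
injectively to maximal independent sets of the tree `G - x - y`, to which induction applies.
-/

section MaximalIndependentSets

variable {V : Type*} {G : SimpleGraph V} {A I J K : Set V} {v x y z : V}

lemma isMaxIndepSet_iff :
    IsMaxIndepSet G I ↔ IsIndepSet G I ∧ ∀ v ∉ I, ∃ u ∈ I, G.Adj u v := by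
  refine ⟨fun ⟨hI, hmax⟩ => ⟨hI, fun v hv => ?_⟩,
    fun ⟨hI, hdom⟩ => ⟨hI, fun J hJ hIJ => ?_⟩⟩
  · by_contra! hfree
    have hins : IsIndepSet G (insert v I) := by
      rintro a (rfl | ha) b (rfl | hb) hab
      exacts [hab.ne rfl, hfree b hb hab.symm, hfree a ha hab, hI ha hb hab]
    exact hv (hmax _ hins (Set.subset_insert v I) ▸ Set.mem_insert v I)
  · refine (Set.Subset.antisymm hIJ fun v hvJ => ?_).symm
    by_contra hvI
    obtain ⟨u, hu, huv⟩ := hdom v hvI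
    exact hJ (hIJ hu) hvJ huv

lemma IsMaxIndepSet.exists_adj (hI : IsMaxIndepSet G I) (hv : v ∉ I) : ∃ u ∈ I, G.Adj u v :=
  (isMaxIndepSet_iff.mp hI).2 v hv

lemma IsMaxIndepSet.mem_or_mem (hI : IsMaxIndepSet G I) (hx : G.neighborSet x ⊆ {y}) :
    x ∈ I ∨ y ∈ I := by
  refine or_iff_not_imp_left.mpr fun hxI => ?_
  obtain ⟨u, hu, hux⟩ := hI.exists_adj hxI
  rwa [← hx hux.symm]

lemma IsMaxIndepSet.eq_of_inter_eq (hAc : IsIndepSet G Aᶜ) (hI : IsMaxIndepSet G I)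
    (hJ : IsMaxIndepSet G J) (h : I ∩ A = J ∩ A) : I = J := by
  suffices key :
      ∀ {I J}, IsIndepSet G I → IsMaxIndepSet G J → I ∩ A = J ∩ A → I ⊆ J from
    (key hI.1 hJ h).antisymm (key hJ.1 hI h.symm)
  intro I J hI hJ h v hv
  by_cases hvA : v ∈ A
  · exact (h ▸ ⟨hv, hvA⟩ : v ∈ J ∩ A).1
  by_contra hvJ
  obtain ⟨u, hu, huv⟩ := hJ.exists_adj hvJ
  have huA : u ∈ A := by_contra fun huA => hAc huA hvA huv
  exact hI (h ▸ ⟨hu, huA⟩ : u ∈ I ∩ A).1 hv huv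

variable [Finite V]

lemma ncard_setOf_isMaxIndepSet_superset_le (hAc : IsIndepSet G Aᶜ) (K : Set V) :
    {I | IsMaxIndepSet G I ∧ K ⊆ I}.ncard ≤ 2 ^ (A \ K).ncard := by
  refine (Set.ncard_le_ncard_of_injOn (· ∩ (A \ K)) (fun _ _ => Set.inter_subset_right) ?_
    (Set.toFinite _)).trans_eq (Set.ncard_powerset _)
  rintro I ⟨hI, hKI⟩ J ⟨hJ, hKJ⟩ h
  refine hI.eq_of_inter_eq hAc hJ (Set.ext fun v => ?_)
  have hv := Set.ext_iff.mp h v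
  by_cases hvK : v ∈ K
  · simp [hKI hvK, hKJ hvK]
  · simpa [hvK] using hv

lemma ncard_setOf_isMaxIndepSet_mem_le (hAc : IsIndepSet G Aᶜ) (v : V) :
    {I | IsMaxIndepSet G I ∧ v ∈ I}.ncard ≤ 2 ^ (A \ G.neighborSet v).ncard := by
  refine (Set.ncard_le_ncard_of_injOn (· ∩ A) ?_ ?_ (Set.toFinite _)).trans_eq
    (Set.ncard_powerset _)
  · rintro I ⟨hI, hvI⟩ w ⟨hwI, hwA⟩
    exact ⟨hwA, hI.1 hvI hwI⟩
  · rintro I ⟨hI, -⟩ J ⟨hJ, -⟩ h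
    exact hI.eq_of_inter_eq hAc hJ h

lemma numMIS_le_two_pow (hAc : IsIndepSet G Aᶜ) : numMIS G ≤ 2 ^ A.ncard := by
  simpa [numMIS] using ncard_setOf_isMaxIndepSet_superset_le hAc ∅

lemma numMIS_le_two_pow_min (hA : IsIndepSet G A) (hAc : IsIndepSet G Aᶜ) :
    numMIS G ≤ 2 ^ min A.ncard Aᶜ.ncard := by
  rcases le_total A.ncard Aᶜ.ncard with h | h
  · simpa [min_eq_left h] using numMIS_le_two_pow hAc
  · simpa [min_eq_right h] using numMIS_le_two_pow (A := Aᶜ) (by rwa [compl_compl])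

lemma numMIS_le_add_of_neighborSet_subset (hx : G.neighborSet x ⊆ {y}) :
    numMIS G ≤
      {I | IsMaxIndepSet G I ∧ x ∈ I}.ncard + {I | IsMaxIndepSet G I ∧ y ∈ I}.ncard :=
  (Set.ncard_le_ncard (fun I hI => (hI.mem_or_mem hx).imp (⟨hI, ·⟩) (⟨hI, ·⟩))).trans
    (Set.ncard_union_le _ _)

end MaximalIndependentSets

lemma exists_isIndepSet_and_isIndepSet_compl {V : Type*} {G : SimpleGraph V}
    (hG : G.IsBipartite) : ∃ A, IsIndepSet G A ∧ IsIndepSet G Aᶜ := by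
  obtain ⟨s, t, hst⟩ := hG.exists_isBipartiteWith
  refine ⟨s, fun u hu w hw huw => ?_, fun u hu w hw huw => ?_⟩ <;>
    rcases hst.mem_of_adj huw with ⟨hu', hw'⟩ | ⟨hu', hw'⟩
  exacts [hst.disjoint.notMem_of_mem_left hw hw', hst.disjoint.notMem_of_mem_left hu hu',
    hu hu', hw hw']

lemma IsIndepSet.mem_of_adj_adj {V : Type*} {G : SimpleGraph V} {A : Set V} {u v w : V}
    (hA : IsIndepSet G A) (hAc : IsIndepSet G Aᶜ) (hu : u ∈ A) (huv : G.Adj u v)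
    (hvw : G.Adj v w) : w ∈ A :=
  by_contra fun hw => hAc (fun hv => hA hu hv huv) hw hvw

section Leaves

variable {V : Type*} [Finite V] {G : SimpleGraph V} {A : Set V} {x x' y z : V}

lemma ncard_setOf_isMaxIndepSet_mem_le_numMIS_induce (hx : G.neighborSet x ⊆ {y})
    (hxy : G.Adj x y) :
    {I | IsMaxIndepSet G I ∧ x ∈ I}.ncard ≤ numMIS (G.induce ({x, y}ᶜ : Set V)) := by
  have hyI : ∀ {I}, IsMaxIndepSet G I → x ∈ I → y ∉ I := fun hI hxI hyI =>
    hI.1 hxI hyI hxy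
  refine Set.ncard_le_ncard_of_injOn (fun I => {v | ↑v ∈ I}) ?_ ?_ (Set.toFinite _)
  · rintro I ⟨hI, hxI⟩
    refine isMaxIndepSet_iff.mpr ⟨fun u hu w hw huw => hI.1 hu hw huw, fun v hvI => ?_⟩
    obtain ⟨u, hu, huv⟩ := hI.exists_adj hvI
    have hux : u ≠ x := by
      rintro rfl
      exact v.2 (Or.inr (hx huv))
    have huy : u ≠ y := by
      rintro rfl
      exact hyI hI hxI hu
    exact ⟨⟨u, by simp [hux, huy]⟩, hu, huv⟩
  · rintro I ⟨hI, hxI⟩ J ⟨hJ, hxJ⟩ h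
    ext v
    by_cases hv : v = x ∨ v = y
    · rcases hv with rfl | rfl
      · simp [hxI, hxJ]
      · simp [hyI hI hxI, hyI hJ hxJ]
    · simpa using Set.ext_iff.mp h ⟨v, by simpa using hv⟩

lemma ncard_setOf_isMaxIndepSet_mem_le_of_adj (hAc : IsIndepSet G Aᶜ) (hxA : x ∈ A)
    (hzA : z ∈ A) (hxz : x ≠ z) (hyx : G.Adj y x) (hyz : G.Adj y z) :
    {I | IsMaxIndepSet G I ∧ y ∈ I}.ncard ≤ 2 ^ (A.ncard - 2) := by
  refine (ncard_setOf_isMaxIndepSet_mem_le hAc y).trans (Nat.pow_le_pow_right two_pos ?_)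
  rw [← Set.ncard_pair hxz, ← Set.ncard_sdiff (Set.pair_subset hxA hzA)]
  exact Set.ncard_le_ncard (Set.sdiff_subset_sdiff_right (Set.pair_subset hyx hyz))

lemma numMIS_le_of_twin_leaves (hAc : IsIndepSet G Aᶜ) (hxA : x ∈ A) (hx'A : x' ∈ A)
    (hxx' : x ≠ x') (hx : G.neighborSet x = {y}) (hx' : G.neighborSet x' = {y}) :
    numMIS G ≤ 2 ^ (A.ncard - 2) + 2 ^ (A.ncard - 2) := by
  have hxy : G.Adj x y := show y ∈ G.neighborSet x by simp [hx]
  have hx'y : G.Adj x' y := show y ∈ G.neighborSet x' by simp [hx']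
  have hsub :
      {I | IsMaxIndepSet G I ∧ x' ∈ I} ⊆ {I | IsMaxIndepSet G I ∧ {x, x'} ⊆ I} := by
    rintro I ⟨hI, hx'I⟩
    have hxI := (hI.mem_or_mem hx.subset).resolve_right fun hyI => hI.1 hx'I hyI hx'y
    exact ⟨hI, Set.pair_subset hxI hx'I⟩
  have hmem : {I | IsMaxIndepSet G I ∧ x' ∈ I}.ncard ≤ 2 ^ (A.ncard - 2) := by
    refine (Set.ncard_le_ncard hsub).trans
      ((ncard_setOf_isMaxIndepSet_superset_le hAc _).trans_eq ?_)
    rw [Set.ncard_sdiff (Set.pair_subset hxA hx'A), Set.ncard_pair hxx']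
  have := ncard_setOf_isMaxIndepSet_mem_le_of_adj hAc hxA hx'A hxx' hxy.symm hx'y.symm
  have := numMIS_le_add_of_neighborSet_subset hx'.subset
  omega

lemma numMIS_le_of_pendant_path (hAc : IsIndepSet G Aᶜ) (hxA : x ∈ A) (hzA : z ∈ A)
    (hxz : x ≠ z) (hx : G.neighborSet x = {y}) (hyz : G.Adj y z) :
    numMIS G ≤ numMIS (G.induce ({x, y}ᶜ : Set V)) + 2 ^ (A.ncard - 2) := by
  have hxy : G.Adj x y := show y ∈ G.neighborSet x by simp [hx]
  have := ncard_setOf_isMaxIndepSet_mem_le_numMIS_induce hx.subset hxy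
  have := ncard_setOf_isMaxIndepSet_mem_le_of_adj hAc hxA hzA hxz hxy.symm hyz
  have := numMIS_le_add_of_neighborSet_subset hx.subset
  omega

end Leaves

namespace SimpleGraph

variable {V : Type*} {G : SimpleGraph V} {u v w x y z : V}

lemma IsAcyclic.neighborSet_eq_of_forall_length_le (hG : G.IsAcyclic) {p : G.Walk u v}
    (hp : p.IsPath) (hpn : ¬p.Nil)
    (hmax : ∀ a b (q : G.Walk a b), q.IsPath → q.length ≤ p.length) :
    G.neighborSet v = {p.penultimate} := by
  refine Set.Subset.antisymm (fun w (hvw : G.Adj v w) => ?_)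
    (Set.singleton_subset_iff.mpr (p.adj_penultimate hpn).symm)
  refine hG.eq_penultimate_of_adj_end hp hvw (by_contra fun hw => ?_)
  have := hmax _ _ _ (hp.concat hw hvw)
  simp at this

lemma Preconnected.eq_or_eq_of_neighborSet_subset (hG : G.Preconnected)
    (hx : G.neighborSet x ⊆ {y}) (hy : G.neighborSet y ⊆ {x}) (w : V) : w = x ∨ w = y := by
  have key : ∀ {a b} (q : G.Walk a b), a = x ∨ a = y → b = x ∨ b = y := by
    intro a b q
    induction q with
    | nil => exact id
    | cons h _ ih =>
      rintro (rfl | rfl)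
      exacts [ih (Or.inr (hx h)), ih (Or.inl (hy h))]
  exact key (hG x w).some (Or.inl rfl)

lemma IsTree.exists_twin_leaves_or_pendant_path [Finite V] (hG : G.IsTree)
    (hV : 2 < Nat.card V) :
    ∃ x y, G.neighborSet x = {y} ∧
      ((∃ x' ≠ x, G.neighborSet x' = {y}) ∨ ∃ z ≠ x, G.neighborSet y = {x, z}) := by
  have := hG.connected.nonempty
  obtain ⟨u, x, p, hp, hmax⟩ := Walk.exists_isPath_forall_isPath_length_le_length G
  have hpn : ¬p.Nil := by
    have : Nontrivial V := Finite.one_lt_card_iff_nontrivial.mp (by omega)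
    obtain ⟨w, hwu⟩ := exists_ne u
    obtain ⟨q, hq⟩ := hG.connected.preconnected.exists_isPath u w
    have := hmax _ _ q hq
    rw [← Walk.length_eq_zero_iff]
    exact fun h => hwu (q.eq_of_length_eq_zero (by omega)).symm
  set y := p.penultimate
  have hx : G.neighborSet x = {y} := hG.isAcyclic.neighborSet_eq_of_forall_length_le hp hpn hmax
  refine ⟨x, y, hx, ?_⟩
  by_cases htwin : ∃ x' ≠ x, G.neighborSet x' = {y}
  · exact Or.inl htwin
  push Not at htwin
  -- a neighbour of `y` off the path ends another longest path, so it would be a second leaf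
  have hnbr : ∀ w, G.Adj y w → w ≠ x → w = p.dropLast.penultimate := by
    intro w hyw hwx
    refine hG.isAcyclic.eq_penultimate_of_adj_end hp.dropLast hyw (by_contra fun hw => ?_)
    have hlen : (p.dropLast.concat hyw).length = p.length := by
      rw [Walk.length_concat, Walk.length_dropLast_add_one hpn]
    have := hG.isAcyclic.neighborSet_eq_of_forall_length_le (hp.dropLast.concat hw hyw)
      (by simp [← Walk.length_eq_zero_iff]) (hlen ▸ hmax)
    exact htwin w hwx (by rwa [Walk.penultimate_concat] at this)
  by_cases hz : ∃ z, G.Adj y z ∧ z ≠ x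
  · obtain ⟨z, hyz, hzx⟩ := hz
    refine Or.inr ⟨z, hzx, Set.ext fun w => ⟨fun hyw => ?_, ?_⟩⟩
    · by_cases hwx : w = x
      · exact Or.inl hwx
      · exact Or.inr ((hnbr w hyw hwx).trans (hnbr z hyz hzx).symm)
    · rintro (rfl | rfl)
      exacts [p.adj_penultimate hpn, hyz]
  · push Not at hz
    have htwo := hG.connected.preconnected.eq_or_eq_of_neighborSet_subset hx.subset hz
    have : Nat.card V ≤ 2 := by
      simpa using Nat.card_le_card_of_surjective (fun b : Bool => if b then x else y)
        fun w => (htwo w).elim (fun h => ⟨true, h.symm⟩) (fun h => ⟨false, h.symm⟩)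
    omega

lemma Preconnected.induce_compl_pair (hG : G.Preconnected) (hx : G.neighborSet x ⊆ {y})
    (hy : G.neighborSet y ⊆ {x, z}) : (G.induce ({x, y}ᶜ : Set V)).Preconnected := by
  rintro ⟨a, ha⟩ ⟨b, hb⟩
  simp only [Set.mem_compl_iff, Set.mem_insert_iff, Set.mem_singleton_iff, not_or] at ha hb
  obtain ⟨p, hp⟩ := hG.exists_isPath a b
  have hxp : x ∉ p.support := hp.isTrail.not_mem_support_of_subsingleton_neighborSet
    (Ne.symm ha.1) (Ne.symm hb.1) (Set.subsingleton_singleton.anti hx)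
  -- hence `p` lives in `G` minus the edge `xy`, where `y` is a leaf as well
  have hpH : ∀ e ∈ p.edges, e ∈ (G.deleteEdges {s(x, y)}).edgeSet := fun e he =>
    (edgeSet_deleteEdges _).symm ▸
      ⟨p.edges_subset_edgeSet he, fun h => hxp (p.fst_mem_support_of_mem_edges (h ▸ he))⟩
  have hyp : y ∉ p.support := by
    rw [← p.support_transfer hpH]
    refine (hp.transfer hpH).isTrail.not_mem_support_of_subsingleton_neighborSet
      (Ne.symm ha.2) (Ne.symm hb.2) ((Set.subsingleton_singleton (a := z)).anti fun w hw => ?_)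
    obtain ⟨hyw, hne⟩ := (deleteEdges_adj ..).mp hw
    exact (hy hyw).resolve_left fun h => hne (by simp [h, Sym2.eq_swap])
  exact ⟨(p.induce _ fun w hw => by
    simp only [Set.mem_compl_iff, Set.mem_insert_iff, Set.mem_singleton_iff, not_or]
    exact ⟨fun h => hxp (h ▸ hw), fun h => hyp (h ▸ hw)⟩)⟩

lemma IsTree.induce_compl_pair (hG : G.IsTree) (hx : G.neighborSet x ⊆ {y})
    (hy : G.neighborSet y = {x, z}) (hzx : z ≠ x) : (G.induce ({x, y}ᶜ : Set V)).IsTree := by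
  have hyz : G.Adj y z := show z ∈ G.neighborSet y by simp [hy]
  have hne : Nonempty ({x, y}ᶜ : Set V) := ⟨⟨z, by simp [hzx, hyz.ne.symm]⟩⟩
  exact ⟨(connected_iff _).mpr
    ⟨hG.connected.preconnected.induce_compl_pair hx hy.subset, hne⟩, hG.isAcyclic.induce _⟩

end SimpleGraph

lemma SimpleGraph.IsTree.numMIS_le_of_card_eq_two_mul {V : Type*} [Finite V]
    {G : SimpleGraph V} (hG : G.IsTree) {k : ℕ} (hk : Nat.card V = 2 * k) :
    numMIS G ≤ 2 ^ (k - 1) + 1 := by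
  induction k using Nat.strong_induction_on generalizing V with
  | _ k ih =>
  obtain ⟨A, hA, hAc⟩ := exists_isIndepSet_and_isIndepSet_compl hG.isBipartite
  have hsum : A.ncard + Aᶜ.ncard = 2 * k := by rw [Set.ncard_add_ncard_compl, hk]
  by_cases hbal : A.ncard = k ∧ 2 ≤ k
  swap
  · refine (numMIS_le_two_pow_min hA hAc).trans ?_
    rcases (by omega : min A.ncard Aᶜ.ncard ≤ k - 1 ∨ min A.ncard Aᶜ.ncard ≤ 1 ∧ k = 1)
      with h | ⟨h, rfl⟩
    · exact (Nat.pow_le_pow_right two_pos h).trans (Nat.le_succ _)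
    · exact (Nat.pow_le_pow_right two_pos h).trans (by norm_num)
  obtain ⟨x, y, hx, hcases⟩ := hG.exists_twin_leaves_or_pendant_path (by omega)
  wlog hxA : x ∈ A generalizing A
  · exact this Aᶜ hAc (by rwa [compl_compl]) (by rwa [compl_compl, add_comm])
      (by omega) hxA
  have hxy : G.Adj x y := show y ∈ G.neighborSet x by simp [hx]
  have hpow : 2 ^ (k - 2) + 2 ^ (k - 2) = 2 ^ (k - 1) := by
    rw [← two_mul, ← pow_succ']
    congr 1
    omega
  rcases hcases with ⟨x', hx'x, hx'⟩ | ⟨z, hzx, hy⟩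
  · have hx'y : G.Adj x' y := show y ∈ G.neighborSet x' by simp [hx']
    have hx'A : x' ∈ A := hA.mem_of_adj_adj hAc hxA hxy hx'y.symm
    have := numMIS_le_of_twin_leaves hAc hxA hx'A hx'x.symm hx hx'
    rw [hbal.1] at this
    omega
  · have hyz : G.Adj y z := show z ∈ G.neighborSet y by simp [hy]
    have hzA : z ∈ A := hA.mem_of_adj_adj hAc hxA hxy hyz
    have hcard : Nat.card ({x, y}ᶜ : Set V) = 2 * (k - 1) := by
      rw [Nat.card_coe_set_eq, Set.ncard_compl, Set.ncard_pair hxy.ne, hk]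
      omega
    have hind := ih (k - 1) (by omega) (hG.induce_compl_pair hx.subset hy hzx) hcard
    have := numMIS_le_of_pendant_path hAc hxA hzA hzx.symm hx hyz
    rw [show k - 1 - 1 = k - 2 by omega] at hind
    rw [hbal.1] at this
    omega

lemma SimpleGraph.IsBipartite.numMIS_le_of_card_eq_two_mul_add_one {V : Type*} [Finite V]
    {G : SimpleGraph V} (hG : G.IsBipartite) {k : ℕ} (hk : Nat.card V = 2 * k + 1) :
    numMIS G ≤ 2 ^ k := by
  obtain ⟨A, hA, hAc⟩ := exists_isIndepSet_and_isIndepSet_compl hG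
  have hsum : A.ncard + Aᶜ.ncard = 2 * k + 1 := by rw [Set.ncard_add_ncard_compl, hk]
  exact (numMIS_le_two_pow_min hA hAc).trans (Nat.pow_le_pow_right two_pos (by omega))

theorem numMIS_tree_le {V : Type*} [Fintype V] (G : SimpleGraph V)
    (hG : G.IsTree) :
    (Even (Fintype.card V) → numMIS G ≤ 2 ^ ((Fintype.card V - 2) / 2) + 1) ∧
    (Odd (Fintype.card V) → numMIS G ≤ 2 ^ ((Fintype.card V - 1) / 2)) := by
  rw [← Nat.card_eq_fintype_card]
  refine ⟨fun ⟨k, hk⟩ => ?_, fun ⟨k, hk⟩ => ?_⟩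
  · rw [show (Nat.card V - 2) / 2 = k - 1 by omega]
    exact hG.numMIS_le_of_card_eq_two_mul (by omega)
  · rw [show (Nat.card V - 1) / 2 = k by omega]
    exact hG.isBipartite.numMIS_le_of_card_eq_two_mul_add_one hk
end
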